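/- The Möbius transform μ_E over the first coordinate is multiplicative from the ⊙-convolution to NSC2: for f, g : 2^{U∖D} × 2^D × 2^D → ℤ and any E ⊆ U∖D, (μ_E f) ⋄₂ (μ_E g) = μ_E (f ⊙ g), where (μ_E f)(B,C) = ∑_{F⊆E} f(F,B,C), (f ⊙ g)(E,B,C) = ∑_{E₁∪E₂=E, B₁⊎B₂=B, C₁⊎C₂=C} f(E₁,B₁,C₁)g(E₂,B₂,C₂)I(B₁,B₂)I(C₁,C₂), and ⋄₂ is NSC2 on the universe D. -/
import Mathlib


/-- `I A B = (-1)^|{(a,b) ∈ A × B : a > b}|`. -/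
def Isgn (A B : Finset ℕ) : ℤ :=
  (-1) ^ ((A ×ˢ B).filter (fun p => p.2 < p.1)).card

/-- Two-coordinate Non-commutative Subset Convolution (NSC2). -/
def nsc2 (p q : Finset ℕ → Finset ℕ → ℤ) (B C : Finset ℕ) : ℤ :=
  ∑ B₁ ∈ B.powerset, ∑ C₁ ∈ C.powerset,
    p B₁ C₁ * q (B \ B₁) (C \ C₁) * Isgn B₁ (B \ B₁) * Isgn C₁ (C \ C₁)

/-- The `⊙` convolution: cover condition on the first coordinate, disjoint unions
(with signs `I`) on the other two. -/
def odot (f g : Finset ℕ → Finset ℕ → Finset ℕ → ℤ) (E B C : Finset ℕ) : ℤ :=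
  ∑ E₁ ∈ E.powerset, ∑ E₂ ∈ E.powerset, ∑ B₁ ∈ B.powerset, ∑ C₁ ∈ C.powerset,
    if E₁ ∪ E₂ = E then
      f E₁ B₁ C₁ * g E₂ (B \ B₁) (C \ C₁) * Isgn B₁ (B \ B₁) * Isgn C₁ (C \ C₁)
    else 0

/-- The Möbius (zeta) transform over the first coordinate. -/
def mobius (E : Finset ℕ) (f : Finset ℕ → Finset ℕ → Finset ℕ → ℤ)
    (B C : Finset ℕ) : ℤ :=
  ∑ F ∈ E.powerset, f F B C

private lemma cover_sum (E : Finset ℕ) (t : Finset ℕ → Finset ℕ → ℤ) :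
    ∑ F ∈ E.powerset, ∑ E₁ ∈ F.powerset, ∑ E₂ ∈ F.powerset,
      (if E₁ ∪ E₂ = F then t E₁ E₂ else 0)
    = ∑ E₁ ∈ E.powerset, ∑ E₂ ∈ E.powerset, t E₁ E₂ := by
  have step : ∀ F ∈ E.powerset,
      (∑ E₁ ∈ F.powerset, ∑ E₂ ∈ F.powerset, if E₁ ∪ E₂ = F then t E₁ E₂ else 0)
      = ∑ E₁ ∈ E.powerset, ∑ E₂ ∈ E.powerset, if E₁ ∪ E₂ = F then t E₁ E₂ else 0 := by
    intro F hF
    rw [Finset.mem_powerset] at hF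
    rw [Finset.sum_subset (Finset.powerset_mono.2 hF)]
    · refine Finset.sum_congr rfl fun E₁ hE₁ => ?_
      by_cases h : E₁ ⊆ F
      · rw [Finset.sum_subset (Finset.powerset_mono.2 hF)]
        intro E₂ _ hE₂
        rw [Finset.mem_powerset] at hE₂
        rw [if_neg]
        intro hc
        exact hE₂ (hc ▸ Finset.subset_union_right)
      · have z : ∀ (s : Finset (Finset ℕ)),
            (∑ E₂ ∈ s, if E₁ ∪ E₂ = F then t E₁ E₂ else 0) = 0 := by
          intro s
          apply Finset.sum_eq_zero
          intro E₂ _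
          rw [if_neg]
          intro hc
          exact h (hc ▸ Finset.subset_union_left)
        rw [z, z]
    · intro E₁ _ hE₁
      rw [Finset.mem_powerset] at hE₁
      apply Finset.sum_eq_zero
      intro E₂ _
      rw [if_neg]
      intro hc
      exact hE₁ (hc ▸ Finset.subset_union_left)
  rw [Finset.sum_congr rfl step, Finset.sum_comm]
  refine Finset.sum_congr rfl fun E₁ hE₁ => ?_
  rw [Finset.sum_comm]
  refine Finset.sum_congr rfl fun E₂ hE₂ => ?_
  rw [Finset.mem_powerset] at hE₁ hE₂
  rw [Finset.sum_ite_eq E.powerset (E₁ ∪ E₂) (fun _ => t E₁ E₂),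
    if_pos (Finset.mem_powerset.2 (Finset.union_subset hE₁ hE₂))]

theorem mobius_mul_odot (D E B C : Finset ℕ)
    (f g : Finset ℕ → Finset ℕ → Finset ℕ → ℤ)
    (hED : Disjoint E D) (hB : B ⊆ D) (hC : C ⊆ D) :
    nsc2 (mobius E f) (mobius E g) B C = mobius E (fun F B' C' => odot f g F B' C') B C := by
  simp only [nsc2, mobius, odot]
  have rhs :
      (∑ F ∈ E.powerset, ∑ E₁ ∈ F.powerset, ∑ E₂ ∈ F.powerset, ∑ B₁ ∈ B.powerset,
        ∑ C₁ ∈ C.powerset, if E₁ ∪ E₂ = F then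
          f E₁ B₁ C₁ * g E₂ (B \ B₁) (C \ C₁) * Isgn B₁ (B \ B₁) * Isgn C₁ (C \ C₁) else 0)
      = ∑ F ∈ E.powerset, ∑ E₁ ∈ F.powerset, ∑ E₂ ∈ F.powerset,
          (if E₁ ∪ E₂ = F then
            ∑ B₁ ∈ B.powerset, ∑ C₁ ∈ C.powerset,
              f E₁ B₁ C₁ * g E₂ (B \ B₁) (C \ C₁) * Isgn B₁ (B \ B₁) * Isgn C₁ (C \ C₁)
          else 0) := by
    refine Finset.sum_congr rfl fun F _ => Finset.sum_congr rfl fun E₁ _ =>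
      Finset.sum_congr rfl fun E₂ _ => ?_
    split
    · rfl
    · simp
  rw [rhs, cover_sum]
  calc
    (∑ B₁ ∈ B.powerset, ∑ C₁ ∈ C.powerset,
        (∑ F ∈ E.powerset, f F B₁ C₁) * (∑ F ∈ E.powerset, g F (B \ B₁) (C \ C₁)) *
          Isgn B₁ (B \ B₁) * Isgn C₁ (C \ C₁))
      = ∑ B₁ ∈ B.powerset, ∑ C₁ ∈ C.powerset, ∑ E₁ ∈ E.powerset, ∑ E₂ ∈ E.powerset,
          f E₁ B₁ C₁ * g E₂ (B \ B₁) (C \ C₁) * Isgn B₁ (B \ B₁) * Isgn C₁ (C \ C₁) := by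
        refine Finset.sum_congr rfl fun B₁ _ => Finset.sum_congr rfl fun C₁ _ => ?_
        rw [Finset.sum_mul_sum, Finset.sum_mul, Finset.sum_mul]
        refine Finset.sum_congr rfl fun E₁ _ => ?_
        rw [Finset.sum_mul, Finset.sum_mul]
    _ = ∑ B₁ ∈ B.powerset, ∑ E₁ ∈ E.powerset, ∑ C₁ ∈ C.powerset, ∑ E₂ ∈ E.powerset,
          f E₁ B₁ C₁ * g E₂ (B \ B₁) (C \ C₁) * Isgn B₁ (B \ B₁) * Isgn C₁ (C \ C₁) := by
        exact Finset.sum_congr rfl fun B₁ _ => Finset.sum_comm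
    _ = ∑ B₁ ∈ B.powerset, ∑ E₁ ∈ E.powerset, ∑ E₂ ∈ E.powerset, ∑ C₁ ∈ C.powerset,
          f E₁ B₁ C₁ * g E₂ (B \ B₁) (C \ C₁) * Isgn B₁ (B \ B₁) * Isgn C₁ (C \ C₁) := by
        exact Finset.sum_congr rfl fun B₁ _ => Finset.sum_congr rfl fun E₁ _ => Finset.sum_comm
    _ = ∑ E₁ ∈ E.powerset, ∑ B₁ ∈ B.powerset, ∑ E₂ ∈ E.powerset, ∑ C₁ ∈ C.powerset,
          f E₁ B₁ C₁ * g E₂ (B \ B₁) (C \ C₁) * Isgn B₁ (B \ B₁) * Isgn C₁ (C \ C₁) :=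
        Finset.sum_comm
    _ = ∑ E₁ ∈ E.powerset, ∑ E₂ ∈ E.powerset, ∑ B₁ ∈ B.powerset, ∑ C₁ ∈ C.powerset,
          f E₁ B₁ C₁ * g E₂ (B \ B₁) (C \ C₁) * Isgn B₁ (B \ B₁) * Isgn C₁ (C \ C₁) :=
        Finset.sum_congr rfl fun E₁ _ => Finset.sum_comm
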